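/- There is no complex diagonalizable matrix A of size n×n, with n ≥ 5, whose exterior square Λ²A has eigenvalue multiset consisting of exactly one eigenvalue equal to s with s ≠ 1, and all remaining n(n-1)/2 − 1 eigenvalues equal to 1. -/

import Mathlib

/-! Conjugating `A` to a diagonal matrix `diagonal d` conjugates `Λ²A` to `diagonal (dᵢ dⱼ)`, since
`Λ²` is multiplicative, so the eigenvalues of `Λ²A` are the products `dᵢ dⱼ`, `i < j`. If all of
them but `dᵢ₀ dⱼ₀` equal `1`, choose three indices `a, b, c` outside `{i₀, j₀}` (possible as
`n ≥ 5`). Then `dᵢ₀`, `dⱼ₀`, `d_b`, `d_c` are all inverse to `d_a`, so `dᵢ₀ = d_b`, `dⱼ₀ = d_c` and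
`dᵢ₀ dⱼ₀ = d_b d_c = 1`. -/

open Polynomial

/-- Index set for the standard basis `eᵢ ∧ eⱼ` (`i < j`) of the exterior square. -/
def AltIdx (n : ℕ) := {p : Fin n × Fin n // p.1 < p.2}

instance (n : ℕ) : Fintype (AltIdx n) := Subtype.fintype _
instance (n : ℕ) : DecidableEq (AltIdx n) := Subtype.instDecidableEq

/-- The matrix of the induced endomorphism `Λ² A` on the exterior square, in the basis
`eᵢ ∧ eⱼ` (`i < j`). -/
def altSq (n : ℕ) (A : Matrix (Fin n) (Fin n) ℂ) : Matrix (AltIdx n) (AltIdx n) ℂ :=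
  fun r c => A r.1.1 c.1.1 * A r.1.2 c.1.2 - A r.1.2 c.1.1 * A r.1.1 c.1.2

theorem Finset.sum_eq_sum_lt_add_swap {ι M : Type*} [Fintype ι] [LinearOrder ι]
    [AddCommMonoid M] (F : ι × ι → M) (hF : ∀ i, F (i, i) = 0) :
    ∑ q, F q = ∑ q with q.1 < q.2, (F q + F q.swap) := by
  have hsplit : ∀ q : ι × ι,
      F q = (if q.1 < q.2 then F q else 0) + (if q.2 < q.1 then F q else 0) := by
    rintro ⟨i, j⟩
    rcases lt_trichotomy i j with h | rfl | h
    · simp [h, h.not_gt]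
    · simp [hF]
    · simp [h, h.not_gt]
  rw [Finset.sum_congr rfl fun q _ => hsplit q, Finset.sum_add_distrib, ← Finset.sum_filter,
    ← Finset.sum_filter, Finset.sum_add_distrib]
  congr 1
  exact Finset.sum_equiv (Equiv.prodComm ι ι) (by simp) (fun _ _ => rfl)

/-- The Cauchy–Binet formula for `2 × 2` minors. -/
lemma altSq_mul (n : ℕ) (A B : Matrix (Fin n) (Fin n) ℂ) :
    altSq n (A * B) = altSq n A * altSq n B := by
  ext r c
  let F : Fin n × Fin n → ℂ := fun q =>
    (A r.1.1 q.1 * A r.1.2 q.2 - A r.1.2 q.1 * A r.1.1 q.2) * (B q.1 c.1.1 * B q.2 c.1.2)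
  calc altSq n (A * B) r c = ∑ q, F q := by
        simp only [altSq, Matrix.mul_apply, Finset.sum_mul_sum, Fintype.sum_prod_type, F,
          ← Finset.sum_sub_distrib]
        exact Finset.sum_congr rfl fun _ _ => Finset.sum_congr rfl fun _ _ => by ring
    _ = ∑ q with q.1 < q.2, (F q + F q.swap) :=
        Finset.sum_eq_sum_lt_add_swap F fun _ => by simp only [F]; ring
    _ = (altSq n A * altSq n B) r c := by
        rw [Matrix.mul_apply,
          Finset.sum_subtype (p := fun q : Fin n × Fin n => q.1 < q.2) _ (by simp)]
        exact Finset.sum_congr rfl fun _ _ => by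
          simp only [altSq, F, Prod.fst_swap, Prod.snd_swap]; ring

lemma altSq_diagonal (n : ℕ) (d : Fin n → ℂ) :
    altSq n (Matrix.diagonal d) = Matrix.diagonal fun r : AltIdx n => d r.1.1 * d r.1.2 := by
  ext r c
  by_cases h : r = c
  · subst h
    simp [altSq, r.2.ne']
  · have hsame : ¬(r.1.1 = c.1.1 ∧ r.1.2 = c.1.2) := fun e => h (Subtype.ext (Prod.ext e.1 e.2))
    have hcross : ¬(r.1.2 = c.1.1 ∧ r.1.1 = c.1.2) := fun e =>
      (r.2.trans_le (e.1.le.trans c.2.le)).ne e.2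
    rw [Matrix.diagonal_apply_ne _ h]
    simp only [altSq, Matrix.diagonal_apply]
    rcases not_and_or.1 hsame with e₁ | e₁ <;> rcases not_and_or.1 hcross with e₂ | e₂ <;>
      simp [e₁, e₂]

def altSqHom (n : ℕ) : Matrix (Fin n) (Fin n) ℂ →* Matrix (AltIdx n) (AltIdx n) ℂ where
  toFun := altSq n
  map_one' := by simpa using altSq_diagonal n 1
  map_mul' := altSq_mul n

theorem Matrix.roots_charpoly_diagonal {R m : Type*} [CommRing R] [IsDomain R] [Fintype m]
    [DecidableEq m] (d : m → R) : (Matrix.diagonal d).charpoly.roots = Finset.univ.val.map d := by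
  rw [Matrix.charpoly_diagonal,
    roots_prod _ _ (Finset.prod_ne_zero_iff.2 fun i _ => X_sub_C_ne_zero _)]
  simp

lemma roots_charpoly_altSq_of_conj_eq_diagonal {n : ℕ} {A : Matrix (Fin n) (Fin n) ℂ}
    (P : (Matrix (Fin n) (Fin n) ℂ)ˣ) {d : Fin n → ℂ}
    (hPd : (↑P⁻¹ : Matrix (Fin n) (Fin n) ℂ) * A * (↑P : Matrix (Fin n) (Fin n) ℂ) =
      Matrix.diagonal d) :
    (altSq n A).charpoly.roots = Finset.univ.val.map fun r : AltIdx n => d r.1.1 * d r.1.2 := by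
  set Q := Units.map (altSqHom n) P
  have hconj : (↑Q⁻¹ : Matrix (AltIdx n) (AltIdx n) ℂ) * altSq n A * (↑Q : Matrix _ _ ℂ) =
      altSq n (Matrix.diagonal d) := by
    rw [← hPd, altSq_mul, altSq_mul]
    rfl
  rw [← Matrix.charpoly_units_conj' Q, ← Matrix.coe_units_inv, hconj, altSq_diagonal,
    Matrix.roots_charpoly_diagonal]

theorem Finset.exists_eq_and_forall_ne_of_univ_map_eq_cons_replicate {α β : Type*} [Fintype α]
    {f : α → β} {a b : β} (hab : a ≠ b) {m : ℕ}
    (h : Finset.univ.val.map f = a ::ₘ Multiset.replicate m b) :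
    ∃ i, f i = a ∧ ∀ j, j ≠ i → f j = b := by
  classical
  have hcount := congrArg (Multiset.count a) h
  rw [Multiset.count_map, Multiset.count_cons_self, Multiset.count_replicate, if_neg hab.symm,
    zero_add] at hcount
  obtain ⟨i, hi⟩ := Multiset.card_eq_one.1 hcount
  have hfiber : ∀ j, a = f j ↔ j = i := fun j => by
    simpa using congrArg (j ∈ ·) hi
  refine ⟨i, ((hfiber i).2 rfl).symm, fun j hj => ?_⟩
  have hmem : f j ∈ a ::ₘ Multiset.replicate m b :=
    h ▸ Multiset.mem_map_of_mem f (Finset.mem_univ j)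
  rcases Multiset.mem_cons.1 hmem with hja | hjb
  · exact absurd ((hfiber j).1 hja.symm) hj
  · exact Multiset.eq_of_mem_replicate hjb

lemma Fin.exists_three_ne_of_five_le {n : ℕ} (hn : 5 ≤ n) (i j : Fin n) :
    ∃ a b c : Fin n, a ≠ b ∧ a ≠ c ∧ b ≠ c ∧
      (a ≠ i ∧ a ≠ j) ∧ (b ≠ i ∧ b ≠ j) ∧ (c ≠ i ∧ c ≠ j) := by
  have hcard : 2 < (Finset.univ \ {i, j} : Finset (Fin n)).card := by
    have := Finset.le_card_sdiff {i, j} (Finset.univ : Finset (Fin n))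
    have := Finset.card_le_two (a := i) (b := j)
    simp only [Finset.card_univ, Fintype.card_fin] at *
    omega
  obtain ⟨a, ha, b, hb, c, hc, hab, hac, hbc⟩ := Finset.two_lt_card.1 hcard
  simp only [Finset.mem_sdiff, Finset.mem_univ, Finset.mem_insert, Finset.mem_singleton,
    not_or, true_and] at ha hb hc
  exact ⟨a, b, c, hab, hac, hbc, ha, hb, hc⟩

theorem AltIdx.mul_eq_one_of_forall_ne {M : Type*} [CommMonoid M] {n : ℕ} (hn : 5 ≤ n)
    (d : Fin n → M) (p : AltIdx n) (h : ∀ q : AltIdx n, q ≠ p → d q.1.1 * d q.1.2 = 1) :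
    d p.1.1 * d p.1.2 = 1 := by
  have hmul : ∀ k l, k ≠ l → l ≠ p.1.1 → l ≠ p.1.2 → d k * d l = 1 := by
    intro k l hkl hl₁ hl₂
    rcases hkl.lt_or_gt with hlt | hgt
    · exact h ⟨(k, l), hlt⟩ fun e => hl₂ (congrArg (fun q : AltIdx n => q.1.2) e)
    · rw [mul_comm]
      exact h ⟨(l, k), hgt⟩ fun e => hl₁ (congrArg (fun q : AltIdx n => q.1.1) e)
  obtain ⟨a, b, c, hab, hac, hbc, ha, hb, hc⟩ := Fin.exists_three_ne_of_five_le hn p.1.1 p.1.2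
  have h₁ : d p.1.1 = d b :=
    left_inv_eq_right_inv (hmul _ a ha.1.symm ha.1 ha.2) (hmul a b hab hb.1 hb.2)
  have h₂ : d p.1.2 = d c :=
    left_inv_eq_right_inv (hmul _ a ha.2.symm ha.1 ha.2) (hmul a c hac hc.1 hc.2)
  rw [h₁, h₂]
  exact hmul b c hbc hc.1 hc.2

/-- For `n ≥ 5`, no diagonalizable `n × n` complex matrix `A` has an exterior square
whose eigenvalue multiset consists of exactly one eigenvalue `s ≠ 1` and all remaining
`n(n-1)/2 - 1` eigenvalues equal to `1`. -/
theorem stmt6 (n : ℕ) (hn : 5 ≤ n) (A : Matrix (Fin n) (Fin n) ℂ)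
    (hdiag : ∃ P : (Matrix (Fin n) (Fin n) ℂ)ˣ, ∃ d : Fin n → ℂ,
      (↑P⁻¹ : Matrix (Fin n) (Fin n) ℂ) * A * (↑P : Matrix (Fin n) (Fin n) ℂ)
        = Matrix.diagonal d)
    (s : ℂ) (hs : s ≠ 1) :
    ¬ (altSq n A).charpoly.roots = s ::ₘ Multiset.replicate (n * (n - 1) / 2 - 1) 1 := by
  intro h
  obtain ⟨P, d, hPd⟩ := hdiag
  rw [roots_charpoly_altSq_of_conj_eq_diagonal P hPd] at h
  obtain ⟨p, hps, hrest⟩ := Finset.exists_eq_and_forall_ne_of_univ_map_eq_cons_replicate hs h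
  exact hs (hps ▸ AltIdx.mul_eq_one_of_forall_ne hn d p hrest)
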